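/- arXiv:2605.20681 — 5 statements merged into one kernel-verified Lean document; each statement's English description precedes it below -/
import Mathlib

section
/- Let (M, d) be a metric space, let z_1, ..., z_K be points of M, let θ0 ∈ M, and let z̃ be any minimizer over z ∈ M of the sum ∑_{k=1}^K d(z, z_k). Suppose γ ∈ (0, 1/2] and at least (1/2 + γ)·K of the points z_k satisfy d(z_k, θ0) ≤ r. Then d(z̃, θ0) ≤ (1 + 1/(2γ))·r. -/
open Finset

/-- Deterministic good-node lemma: if a geometric median `ztilde` of points
`z 1, ..., z K` in a metric space is taken, and at least `(1/2 + γ) * K` of the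
points lie within distance `r` of `θ0`, then `dist ztilde θ0 ≤ (1 + 1/(2γ)) * r`. -/
theorem stmt_0 {M : Type*} [MetricSpace M] {K : ℕ} (hK : 0 < K)
    (z : Fin K → M) (θ0 : M) (ztilde : M)
    (hmin : ∀ z' : M, ∑ k, dist ztilde (z k) ≤ ∑ k, dist z' (z k))
    (γ r : ℝ) (hγ0 : 0 < γ) (hγ2 : γ ≤ 1 / 2)
    (hgood : (1 / 2 + γ) * K ≤
      ((Finset.univ : Finset (Fin K)).filter (fun k => dist (z k) θ0 ≤ r)).card) :
    dist ztilde θ0 ≤ (1 + 1 / (2 * γ)) * r := by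
  classical
  set S := (Finset.univ : Finset (Fin K)).filter (fun k => dist (z k) θ0 ≤ r) with hSdef
  set n : ℝ := (S.card : ℝ) with hndef
  set D : ℝ := dist ztilde θ0 with hDdef
  have hKpos : (0:ℝ) < K := by exact_mod_cast hK
  have hn : (1 / 2 + γ) * K ≤ n := hgood
  have hnpos : 0 < n := lt_of_lt_of_le (by positivity) hn
  have hSne : S.Nonempty := by
    rw [← Finset.card_pos]
    exact_mod_cast (show (0:ℝ) < (S.card:ℝ) from hnpos)
  have hr : 0 ≤ r := by
    obtain ⟨k, hk⟩ := hSne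
    exact le_trans dist_nonneg (Finset.mem_filter.mp hk).2
  have hnK : n ≤ K := by
    have h1 : S.card ≤ (Finset.univ : Finset (Fin K)).card :=
      Finset.card_le_card (Finset.filter_subset _ _)
    simp only [Finset.card_univ, Fintype.card_fin] at h1
    rw [hndef]; exact_mod_cast h1
  -- lower bound on sum over S
  have hA : n * (D - r) ≤ ∑ k ∈ S, dist ztilde (z k) := by
    have := Finset.card_nsmul_le_sum S (fun k => dist ztilde (z k)) (D - r)
      (fun k hk => by
        have hkr := (Finset.mem_filter.mp hk).2
        have := dist_triangle ztilde (z k) θ0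
        simp only [hDdef]; linarith)
    simpa [nsmul_eq_mul, mul_comm] using this
  have hC : ∑ k ∈ S, dist θ0 (z k) ≤ n * r := by
    have := Finset.sum_le_card_nsmul S (fun k => dist θ0 (z k)) r
      (fun k hk => by
        have hkr := (Finset.mem_filter.mp hk).2
        show dist θ0 (z k) ≤ r
        rwa [dist_comm])
    simpa [nsmul_eq_mul, mul_comm] using this
  set T := (Finset.univ : Finset (Fin K)).filter (fun k => ¬ dist (z k) θ0 ≤ r) with hTdef
  have hcardT : (T.card : ℝ) = K - n := by
    have h := Finset.card_filter_add_card_filter_not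
      (s := (Finset.univ : Finset (Fin K))) (p := fun k => dist (z k) θ0 ≤ r)
    have : S.card + T.card = K := by
      rw [hSdef, hTdef]; simpa using h
    have := congrArg (fun x : ℕ => (x : ℝ)) this
    push_cast at this
    linarith
  have hE : ∑ k ∈ T, dist θ0 (z k) ≤ (K - n) * D + ∑ k ∈ T, dist ztilde (z k) := by
    rw [← hcardT]
    have h1 : ∑ k ∈ T, dist θ0 (z k) ≤ ∑ k ∈ T, (D + dist ztilde (z k)) := by
      refine Finset.sum_le_sum (fun k _ => ?_)
      have := dist_triangle θ0 ztilde (z k)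
      have hc : dist θ0 ztilde = D := by rw [hDdef, dist_comm]
      linarith
    rw [Finset.sum_add_distrib, Finset.sum_const, nsmul_eq_mul] at h1
    linarith
  have hsplit1 : ∑ k, dist ztilde (z k) =
      ∑ k ∈ S, dist ztilde (z k) + ∑ k ∈ T, dist ztilde (z k) := by
    rw [hSdef, hTdef, Finset.sum_filter_add_sum_filter_not]
  have hsplit2 : ∑ k, dist θ0 (z k) =
      ∑ k ∈ S, dist θ0 (z k) + ∑ k ∈ T, dist θ0 (z k) := by
    rw [hSdef, hTdef, Finset.sum_filter_add_sum_filter_not]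
  have hmin0 := hmin θ0
  rw [hsplit1, hsplit2] at hmin0
  -- key inequality: (2n - K) * D ≤ 2 n r
  have hkey : (2 * n - K) * D ≤ 2 * n * r := by nlinarith [hmin0, hA, hC, hE]
  have hc : (0:ℝ) < 2 * n - K := by nlinarith
  have hcc : (0:ℝ) < 2 * γ * (2 * n - K) := by positivity
  rw [← mul_le_mul_iff_right₀ hcc]
  have e : 2 * γ * (1 + 1 / (2 * γ)) = 2 * γ + 1 := by field_simp
  have hrhs : 2 * γ * (2 * n - K) * ((1 + 1 / (2 * γ)) * r)
      = (2 * γ + 1) * (2 * n - K) * r := by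
    have : 2 * γ * (2 * n - K) * ((1 + 1 / (2 * γ)) * r)
        = (2 * γ * (1 + 1 / (2 * γ))) * ((2 * n - K) * r) := by ring
    rw [this, e]; ring
  rw [hrhs]
  nlinarith [mul_le_mul_of_nonneg_left hkey (le_of_lt hγ0),
    mul_nonneg (show (0:ℝ) ≤ 2 * n - (2 * γ + 1) * K by linarith) hr]
end

section
/- Let (Ω, 𝔽, P) be a probability space, (M, d) a metric space, θ0 ∈ M, and σ > 0. Let Y_1, ..., Y_K : Ω → M be independent measurable random points with E[d(Y_k, θ0)^2] ≤ σ^2 for every k. Let Z : Ω → M be measurable and suppose that almost surely Z minimizes z ↦ ∑_{k=1}^K d(z, Y_k) over M. Then P( d(Z, θ0) > 10σ ) ≤ exp(−K/32). -/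
open MeasureTheory ProbabilityTheory

lemma det_median {M : Type*} [MetricSpace M] {K : ℕ} (hK : 0 < K)
    (y : Fin K → M) (z θ0 : M) {r : ℝ} (hr : 0 ≤ r)
    (hmin : ∑ k, dist z (y k) ≤ ∑ k, dist θ0 (y k))
    (S : Finset (Fin K)) (hS : ∀ k ∈ S, dist (y k) θ0 ≤ r)
    (hcard : 5 * (K : ℝ) ≤ 8 * S.card) :
    dist z θ0 ≤ 5 * r := by
  set D := dist z θ0 with hD
  set s := (S.card : ℝ) with hs
  have hsK : s ≤ K := by exact_mod_cast (Nat.cast_le.mpr (S.card_le_univ.trans_eq (by simp)))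
  have hA : s * (D - r) ≤ ∑ k ∈ S, dist z (y k) := by
    calc s * (D - r) = ∑ _k ∈ S, (D - r) := by rw [Finset.sum_const, nsmul_eq_mul]
    _ ≤ ∑ k ∈ S, dist z (y k) := by
        refine Finset.sum_le_sum fun k hk => ?_
        have := dist_triangle z (y k) θ0
        have := hS k hk
        simp only [hD] at *
        linarith
  have hB : (∑ k ∈ Sᶜ, dist θ0 (y k)) - ((K : ℝ) - s) * D ≤ ∑ k ∈ Sᶜ, dist z (y k) := by
    have hcc : ((Sᶜ.card : ℝ)) = (K : ℝ) - s := by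
      rw [Finset.card_compl]
      have : S.card ≤ Fintype.card (Fin K) := S.card_le_univ.trans_eq (by simp)
      rw [Nat.cast_sub this]
      simp [hs]
    calc (∑ k ∈ Sᶜ, dist θ0 (y k)) - ((K : ℝ) - s) * D
        = ∑ k ∈ Sᶜ, (dist θ0 (y k) - D) := by
          rw [Finset.sum_sub_distrib, Finset.sum_const, nsmul_eq_mul, hcc]
      _ ≤ ∑ k ∈ Sᶜ, dist z (y k) := by
          refine Finset.sum_le_sum fun k _ => ?_
          have : dist θ0 z = D := by rw [hD, dist_comm]
          simp only [hD] at *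
          linarith [dist_triangle θ0 z (y k)]
  have hC : ∑ k ∈ S, dist θ0 (y k) ≤ s * r := by
    calc ∑ k ∈ S, dist θ0 (y k) ≤ ∑ _k ∈ S, r :=
          Finset.sum_le_sum fun k hk => by rw [dist_comm]; exact hS k hk
      _ = s * r := by rw [Finset.sum_const, nsmul_eq_mul]
  have hsplit : ∀ f : Fin K → ℝ, ∑ k ∈ S, f k + ∑ k ∈ Sᶜ, f k = ∑ k, f k :=
    fun f => Finset.sum_add_sum_compl S f
  have h1 := hsplit (fun k => dist z (y k))
  have h2 := hsplit (fun k => dist θ0 (y k))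
  have key : D * (2 * s - K) ≤ 2 * s * r := by nlinarith
  have hKpos : (0 : ℝ) < K := by exact_mod_cast hK
  nlinarith [dist_nonneg.trans_eq hD.symm]

lemma exp_quarter_le : Real.exp (1/4) ≤ (2278125 : ℝ) / 1679616 := by
  have h4 : Real.exp (1/4) ^ 4 = Real.exp 1 := by
    rw [← Real.exp_nat_mul]; norm_num
  refine le_of_pow_le_pow_left₀ (n := 4) (by norm_num) (by norm_num) ?_
  rw [h4]
  calc Real.exp 1 ≤ 2.7182818286 := Real.exp_one_lt_d9.le
    _ ≤ ((2278125 : ℝ) / 1679616) ^ 4 := by norm_num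

lemma num_key : Real.exp (-(3/8) * Real.log (9/5)) * (6/5) ≤ Real.exp (-(1/32)) := by
  refine le_of_pow_le_pow_left₀ (n := 8) (by norm_num) (Real.exp_pos _).le ?_
  have l1 : Real.exp (-(3/8) * Real.log (9/5)) ^ 8 = (((9:ℝ)/5) ^ (3:ℕ))⁻¹ := by
    rw [← Real.exp_nat_mul]
    have h : (8:ℕ) * (-(3/8) * Real.log (9/5)) = -Real.log (((9:ℝ)/5) ^ (3:ℕ)) := by
      rw [Real.log_pow]; push_cast; ring
    rw [h, Real.exp_neg, Real.exp_log (by positivity)]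
  have l2 : Real.exp (-(1/32)) ^ 8 = Real.exp (-(1/4)) := by
    rw [← Real.exp_nat_mul]; norm_num
  rw [mul_pow, l1, l2, Real.exp_neg, inv_eq_one_div, inv_eq_one_div,
    div_mul_eq_mul_div, le_div_iff₀ (Real.exp_pos _)]
  have := exp_quarter_le
  have h2 : (1:ℝ) * (6/5)^8 / (9/5:ℝ)^(3:ℕ) = 1679616/2278125 := by norm_num
  rw [h2, div_mul_eq_mul_div, div_le_iff₀ (by norm_num)]
  nlinarith [Real.exp_pos (1/4 : ℝ)]

/-- High-probability bound for the geometric median of independent random points: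
if `E[d(Y_k, θ0)^2] ≤ σ^2` for each of `K` independent random points `Y_k` in a metric
space and `Z` is almost surely a geometric median of the `Y_k`, then
`P(d(Z, θ0) > 10 σ) ≤ exp (-K/32)`. -/
theorem stmt_1 {Ω : Type*} [MeasurableSpace Ω] (P : Measure Ω) [IsProbabilityMeasure P]
    {M : Type*} [MetricSpace M] [MeasurableSpace M] [BorelSpace M]
    (θ0 : M) (σ : ℝ) (hσ : 0 < σ) {K : ℕ} (hK : 0 < K)
    (Y : Fin K → Ω → M) (hYmeas : ∀ k, Measurable (Y k))
    (hindep : iIndepFun Y P)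
    (hmom : ∀ k, ∫⁻ ω, ENNReal.ofReal ((dist (Y k ω) θ0) ^ 2) ∂P ≤ ENNReal.ofReal (σ ^ 2))
    (Z : Ω → M) (hZmeas : Measurable Z)
    (hZmin : ∀ᵐ ω ∂P, ∀ z : M, ∑ k, dist (Z ω) (Y k ω) ≤ ∑ k, dist z (Y k ω)) :
    P {ω | 10 * σ < dist (Z ω) θ0} ≤ ENNReal.ofReal (Real.exp (-(K : ℝ) / 32)) := by
  classical
  -- the "far" set in M and the bad events
  have hsmeas : MeasurableSet {m : M | 2 * σ < dist m θ0} :=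
    (isOpen_lt continuous_const (continuous_id.dist continuous_const)).measurableSet
  set B : Fin K → Set Ω := fun k => {ω | 2 * σ < dist (Y k ω) θ0} with hBdef
  have hBmeas : ∀ k, MeasurableSet (B k) := fun k => (hYmeas k) hsmeas
  -- Markov: P(B k) ≤ 1/4
  have hp : ∀ k, P (B k) ≤ ENNReal.ofReal (1/4) := by
    intro k
    have hfmeas : AEMeasurable (fun ω => ENNReal.ofReal (dist (Y k ω) θ0 ^ 2)) P :=
      ((((continuous_id.dist continuous_const).measurable.comp (hYmeas k)).pow_const 2).ennreal_ofReal).aemeasurable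
    have hmarkov := mul_meas_ge_le_lintegral₀ hfmeas (ENNReal.ofReal (4 * σ ^ 2))
    have hsub : B k ⊆ {ω | ENNReal.ofReal (4 * σ ^ 2) ≤ ENNReal.ofReal (dist (Y k ω) θ0 ^ 2)} := by
      intro ω hω
      have h2 : 2 * σ < dist (Y k ω) θ0 := hω
      have : 4 * σ ^ 2 ≤ dist (Y k ω) θ0 ^ 2 := by nlinarith
      exact ENNReal.ofReal_le_ofReal this
    have h1 : ENNReal.ofReal (4 * σ ^ 2) * P (B k) ≤ ENNReal.ofReal (σ ^ 2) :=
      le_trans (le_trans (mul_le_mul_right (measure_mono hsub) _) hmarkov) (hmom k)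
    have h0 : ENNReal.ofReal (4 * σ ^ 2) ≠ 0 := by
      simp only [ne_eq, ENNReal.ofReal_eq_zero, not_le]; positivity
    have htop : ENNReal.ofReal (4 * σ ^ 2) ≠ ⊤ := ENNReal.ofReal_ne_top
    have h2 : P (B k) ≤ ENNReal.ofReal (σ ^ 2) / ENNReal.ofReal (4 * σ ^ 2) :=
      (ENNReal.le_div_iff_mul_le (Or.inl h0) (Or.inl htop)).mpr (by rwa [mul_comm])
    calc P (B k) ≤ ENNReal.ofReal (σ ^ 2) / ENNReal.ofReal (4 * σ ^ 2) := h2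
      _ = ENNReal.ofReal (σ ^ 2 / (4 * σ ^ 2)) := (ENNReal.ofReal_div_of_pos (by positivity)).symm
      _ = ENNReal.ofReal (1/4) := by congr 1; field_simp
  have hpr : ∀ k, (P (B k)).toReal ≤ 1/4 := fun k =>
    ENNReal.toReal_le_of_le_ofReal (by norm_num) (hp k)
  -- Bernoulli indicators
  set f : M → ℝ := fun m => if 2 * σ < dist m θ0 then 1 else 0 with hfdef
  have hfm : Measurable f := Measurable.ite hsmeas measurable_const measurable_const
  set X : Fin K → Ω → ℝ := fun k ω => if 2 * σ < dist (Y k ω) θ0 then 1 else 0 with hXdef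
  have hXmeas : ∀ k, Measurable (X k) := fun k => hfm.comp (hYmeas k)
  have hXindep : iIndepFun X P :=
    hindep.comp (fun _ => f) (fun _ => hfm)
  set t : ℝ := Real.log (9/5) with htdef
  have ht : 0 ≤ t := Real.log_nonneg (by norm_num)
  have het : Real.exp t = 9/5 := Real.exp_log (by norm_num)
  have hpt : ∀ k ω, Real.exp (t * X k ω)
      = (B k).indicator (fun _ => Real.exp t - 1) ω + 1 := by
    intro k ω
    by_cases h : 2 * σ < dist (Y k ω) θ0 <;>
      simp [X, B, Set.indicator, h]
  have hInt : ∀ k, Integrable (fun ω => Real.exp (t * X k ω)) P := by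
    intro k
    have : (fun ω => Real.exp (t * X k ω))
        = fun ω => (B k).indicator (fun _ => Real.exp t - 1) ω + 1 := funext (hpt k)
    rw [this]
    exact ((integrable_const _).indicator (hBmeas k)).add (integrable_const 1)
  have hmgf : ∀ k, mgf (X k) P t ≤ 6/5 := by
    intro k
    have hcalc : mgf (X k) P t = (Real.exp t - 1) * (P (B k)).toReal + 1 := by
      unfold mgf
      rw [show (fun ω => Real.exp (t * X k ω))
          = fun ω => (B k).indicator (fun _ => Real.exp t - 1) ω + 1 from funext (hpt k)]
      rw [integral_add ((integrable_const _).indicator (hBmeas k)) (integrable_const 1),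
        integral_indicator_const _ (hBmeas k)]
      simp [smul_eq_mul, mul_comm, Measure.real]
    rw [hcalc, het]
    have h0 := ENNReal.toReal_nonneg (a := P (B k))
    have := hpr k
    nlinarith
  -- Chernoff bound
  set W : Ω → ℝ := ∑ k, X k with hWdef
  have hintsum : Integrable (fun ω => Real.exp (t * W ω)) P := by
    have := hXindep.integrable_exp_mul_sum hXmeas (s := Finset.univ) (fun i _ => hInt i)
    exact this
  have hcher := measure_ge_le_exp_mul_mgf (μ := P) (X := W) (3 * K / 8) ht hintsum
  have hprod : mgf W P t ≤ (6/5) ^ K := by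
    rw [hWdef, hXindep.mgf_sum hXmeas]
    calc ∏ k, mgf (X k) P t ≤ ∏ _k : Fin K, ((6:ℝ)/5) :=
        Finset.prod_le_prod (fun k _ => mgf_nonneg) (fun k _ => hmgf k)
      _ = (6/5) ^ K := by simp [div_pow]
  have hbound : (P {ω | 3 * (K:ℝ) / 8 ≤ W ω}).toReal ≤ Real.exp (-(K : ℝ) / 32) := by
    have h1 : Real.exp (-t * (3 * K / 8)) * mgf W P t
        ≤ Real.exp (-t * (3 * K / 8)) * (6/5) ^ K :=
      mul_le_mul_of_nonneg_left hprod (Real.exp_pos _).le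
    have h2 : Real.exp (-t * (3 * K / 8)) * ((6:ℝ)/5) ^ K
        = (Real.exp (-(3/8) * t) * (6/5)) ^ K := by
      rw [mul_pow, ← Real.exp_nat_mul]
      congr 2
      ring
    have h3 : (Real.exp (-(3/8) * t) * ((6:ℝ)/5)) ^ K ≤ Real.exp (-(1/32)) ^ K := by
      refine pow_le_pow_left₀ (by positivity) ?_ K
      exact num_key
    have h4 : Real.exp (-(1/32) : ℝ) ^ K = Real.exp (-(K : ℝ) / 32) := by
      rw [← Real.exp_nat_mul]
      congr 1
      ring
    calc (P {ω | 3 * (K:ℝ) / 8 ≤ W ω}).toReal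
        ≤ Real.exp (-t * (3 * K / 8)) * mgf W P t := hcher
      _ ≤ (Real.exp (-(3/8) * t) * (6/5)) ^ K := by rw [← h2]; exact h1
      _ ≤ Real.exp (-(1/32)) ^ K := h3
      _ = Real.exp (-(K : ℝ) / 32) := h4
  -- event inclusion
  have hsub : ∀ᵐ ω ∂P, 10 * σ < dist (Z ω) θ0 → (3 * (K:ℝ) / 8 ≤ W ω) := by
    filter_upwards [hZmin] with ω hmin h10
    by_contra hlt
    push_neg at hlt
    set S : Finset (Fin K) := Finset.univ.filter (fun k => dist (Y k ω) θ0 ≤ 2 * σ) with hSdef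
    have hWval : W ω = ((Finset.univ.filter (fun k => 2 * σ < dist (Y k ω) θ0)).card : ℝ) := by
      rw [hWdef]
      simp only [Finset.sum_apply, hXdef]
      rw [Finset.sum_boole]
    have hcards : S.card + (Finset.univ.filter (fun k => 2 * σ < dist (Y k ω) θ0)).card = K := by
      have := Finset.card_filter_add_card_filter_not
        (s := (Finset.univ : Finset (Fin K))) (p := fun k => dist (Y k ω) θ0 ≤ 2 * σ)
      simp only [not_le] at this
      simpa using this
    have hScard : 5 * (K : ℝ) ≤ 8 * S.card := by
      have hKc : (S.card : ℝ) + ((Finset.univ.filter (fun k => 2 * σ < dist (Y k ω) θ0)).card : ℝ)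
          = K := by exact_mod_cast hcards
      rw [hWval] at hlt
      linarith
    have hdet := det_median hK (fun k => Y k ω) (Z ω) θ0 (r := 2 * σ) (by positivity)
      (hmin θ0) S (fun k hk => (Finset.mem_filter.mp hk).2) hScard
    linarith
  have hmono : P {ω | 10 * σ < dist (Z ω) θ0} ≤ P {ω | 3 * (K:ℝ) / 8 ≤ W ω} :=
    measure_mono_ae (hsub.mono fun ω h => h)
  calc P {ω | 10 * σ < dist (Z ω) θ0} ≤ P {ω | 3 * (K:ℝ) / 8 ≤ W ω} := hmono
    _ = ENNReal.ofReal ((P {ω | 3 * (K:ℝ) / 8 ≤ W ω}).toReal) :=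
        (ENNReal.ofReal_toReal (measure_ne_top P _)).symm
    _ ≤ ENNReal.ofReal (Real.exp (-(K : ℝ) / 32)) := ENNReal.ofReal_le_ofReal hbound
end

section
/- Let p ≥ 1, let (Y, d_Y) be a metric space, fix α ∈ (0, 2), and equip M = ℝ^p × Y with the scaled product distance d_α((μ, u), (μ', u'))^2 = α·‖μ − μ'‖^2 + (2 − α)·d_Y(u, u')^2. Let θ0 = (μ0, u0) ∈ M, let v_μ, v_𝒰 > 0 and b ≥ 1, and let θ̂_1, ..., θ̂_K : Ω → M be independent random points on a probability space with E[d_α(θ̂_k, θ0)^2] ≤ (α·v_μ + (2 − α)·v_𝒰)/b for every k. Let θ̃ = (μ̃, ũ) be measurable and almost surely a minimizer of θ ↦ ∑_{k=1}^K d_α(θ, θ̂_k). Then with probability at least 1 − exp(−K/32), both ‖μ̃ − μ0‖ ≤ (10/√α)·√((α·v_μ + (2 − α)·v_𝒰)/b) and d_Y(ũ, u0) ≤ (10/√(2 − α))·√((α·v_μ + (2 − α)·v_𝒰)/b). -/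
open MeasureTheory ProbabilityTheory

/-- The scaled product distance on `ℝ^p × Y`:
`d_α((μ,u),(μ',u'))^2 = α ‖μ - μ'‖^2 + (2 - α) d_Y(u,u')^2`. -/
noncomputable def scaledProdDist {p : ℕ} {Y : Type*} [MetricSpace Y] (α : ℝ)
    (a b : EuclideanSpace ℝ (Fin p) × Y) : ℝ :=
  Real.sqrt (α * ‖a.1 - b.1‖ ^ 2 + (2 - α) * dist a.2 b.2 ^ 2)

section Aux

variable {p : ℕ} {Y : Type*} [MetricSpace Y] {α : ℝ}

lemma spd_nonneg (α : ℝ) (a b : EuclideanSpace ℝ (Fin p) × Y) :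
    0 ≤ scaledProdDist α a b := Real.sqrt_nonneg _

lemma spd_sq (hα0 : 0 ≤ α) (hα2 : α ≤ 2) (a b : EuclideanSpace ℝ (Fin p) × Y) :
    scaledProdDist α a b ^ 2 = α * ‖a.1 - b.1‖ ^ 2 + (2 - α) * dist a.2 b.2 ^ 2 := by
  apply Real.sq_sqrt
  have h1 : 0 ≤ α * ‖a.1 - b.1‖ ^ 2 := mul_nonneg hα0 (sq_nonneg _)
  have h2 : 0 ≤ (2 - α) * dist a.2 b.2 ^ 2 := mul_nonneg (by linarith) (sq_nonneg _)
  linarith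

lemma spd_symm (α : ℝ) (a b : EuclideanSpace ℝ (Fin p) × Y) :
    scaledProdDist α a b = scaledProdDist α b a := by
  unfold scaledProdDist
  rw [norm_sub_rev, dist_comm]

lemma sqrt_minkowski {c d x1 x2 y1 y2 : ℝ} (hc : 0 ≤ c) (hd : 0 ≤ d)
    (hx1 : 0 ≤ x1) (hx2 : 0 ≤ x2) (hy1 : 0 ≤ y1) (hy2 : 0 ≤ y2) :
    Real.sqrt (c * (x1 + x2) ^ 2 + d * (y1 + y2) ^ 2) ≤
      Real.sqrt (c * x1 ^ 2 + d * y1 ^ 2) + Real.sqrt (c * x2 ^ 2 + d * y2 ^ 2) := by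
  set u := Real.sqrt (c * x1 ^ 2 + d * y1 ^ 2) with hu_def
  set v := Real.sqrt (c * x2 ^ 2 + d * y2 ^ 2) with hv_def
  have hu0 : 0 ≤ u := Real.sqrt_nonneg _
  have hv0 : 0 ≤ v := Real.sqrt_nonneg _
  have hu : u ^ 2 = c * x1 ^ 2 + d * y1 ^ 2 := Real.sq_sqrt (by positivity)
  have hv : v ^ 2 = c * x2 ^ 2 + d * y2 ^ 2 := Real.sq_sqrt (by positivity)
  have hkey2 : (c * (x1 * x2) + d * (y1 * y2)) ^ 2 ≤ (u * v) ^ 2 := by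
    rw [mul_pow, hu, hv]
    nlinarith [mul_nonneg (mul_nonneg hc hd) (sq_nonneg (x1 * y2 - x2 * y1))]
  have hkey : c * (x1 * x2) + d * (y1 * y2) ≤ u * v := by
    nlinarith [mul_nonneg hu0 hv0]
  have h : c * (x1 + x2) ^ 2 + d * (y1 + y2) ^ 2 ≤ (u + v) ^ 2 := by
    have : (u + v) ^ 2 = u ^ 2 + 2 * (u * v) + v ^ 2 := by ring
    rw [this, hu, hv]; nlinarith
  calc Real.sqrt (c * (x1 + x2) ^ 2 + d * (y1 + y2) ^ 2)
      ≤ Real.sqrt ((u + v) ^ 2) := Real.sqrt_le_sqrt h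
    _ = u + v := Real.sqrt_sq (by linarith)

lemma spd_triangle (hα0 : 0 ≤ α) (hα2 : α ≤ 2) (a b c : EuclideanSpace ℝ (Fin p) × Y) :
    scaledProdDist α a c ≤ scaledProdDist α a b + scaledProdDist α b c := by
  have h1 : ‖a.1 - c.1‖ ≤ ‖a.1 - b.1‖ + ‖b.1 - c.1‖ := by
    have : a.1 - c.1 = (a.1 - b.1) + (b.1 - c.1) := by abel
    rw [this]; exact norm_add_le _ _
  have h2 : dist a.2 c.2 ≤ dist a.2 b.2 + dist b.2 c.2 := dist_triangle _ _ _
  have h2α : (0:ℝ) ≤ 2 - α := by linarith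
  unfold scaledProdDist
  calc Real.sqrt (α * ‖a.1 - c.1‖ ^ 2 + (2 - α) * dist a.2 c.2 ^ 2)
      ≤ Real.sqrt (α * (‖a.1 - b.1‖ + ‖b.1 - c.1‖) ^ 2
          + (2 - α) * (dist a.2 b.2 + dist b.2 c.2) ^ 2) := by
        apply Real.sqrt_le_sqrt
        have e1 := mul_le_mul_of_nonneg_left
          (pow_le_pow_left₀ (norm_nonneg _) h1 2) hα0
        have e2 := mul_le_mul_of_nonneg_left
          (pow_le_pow_left₀ dist_nonneg h2 2) h2α
        linarith
    _ ≤ _ := sqrt_minkowski hα0 h2α (norm_nonneg _) (norm_nonneg _)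
        dist_nonneg dist_nonneg

/-- Numeric inequality: `(10/9) * exp (-(log 2)/5) ≤ exp (-1/32)`. -/
lemma base_num_ineq : (10/9 : ℝ) * Real.exp (-Real.log 2 / 5) ≤ Real.exp (-(1/32 : ℝ)) := by
  have hx : (0:ℝ) < Real.exp (5/64) := Real.exp_pos _
  have e1 : Real.exp (5/64 : ℝ) ≤ 64/59 := by
    have h := Real.add_one_le_exp (-(5/64) : ℝ)
    rw [Real.exp_neg] at h
    have h2 : Real.exp (5/64 : ℝ) * (59/64) ≤ Real.exp (5/64 : ℝ) * (Real.exp (5/64 : ℝ))⁻¹ := by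
      apply mul_le_mul_of_nonneg_left _ hx.le
      linarith
    rw [mul_inv_cancel₀ hx.ne'] at h2
    linarith
  have e2 : Real.exp (5/32 : ℝ) ≤ 4096/3481 := by
    have : (5/32 : ℝ) = 5/64 + 5/64 := by norm_num
    rw [this, Real.exp_add]
    calc Real.exp (5/64 : ℝ) * Real.exp (5/64 : ℝ) ≤ (64/59) * (64/59) :=
          mul_le_mul e1 e1 hx.le (by norm_num)
      _ = 4096/3481 := by norm_num
  have e3 : (3481/4096 : ℝ) ≤ Real.exp (-(5/32 : ℝ)) := by
    rw [Real.exp_neg]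
    rw [show (3481/4096 : ℝ) = (4096/3481 : ℝ)⁻¹ by norm_num]
    exact inv_anti₀ (Real.exp_pos _) e2
  have hpow : ((10/9 : ℝ) * Real.exp (-Real.log 2 / 5)) ^ 5 ≤ (Real.exp (-(1/32 : ℝ))) ^ 5 := by
    rw [mul_pow, ← Real.exp_nat_mul, ← Real.exp_nat_mul]
    have h5a : ((5:ℕ) : ℝ) * (-Real.log 2 / 5) = -Real.log 2 := by push_cast; ring
    have h5b : ((5:ℕ) : ℝ) * (-(1/32 : ℝ)) = -(5/32 : ℝ) := by push_cast; ring
    rw [h5a, h5b, Real.exp_neg, Real.exp_log (by norm_num : (0:ℝ) < 2)]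
    calc (10/9 : ℝ) ^ 5 * (2:ℝ)⁻¹ = 50000/59049 := by norm_num
      _ ≤ 3481/4096 := by norm_num
      _ ≤ Real.exp (-(5/32 : ℝ)) := e3
  exact le_of_pow_le_pow_left₀ (by norm_num) (Real.exp_pos _).le hpow

/-- deterministic geometric-median lemma -/
lemma median_close {K : ℕ} (hK : 0 < K) {r : ℝ} (hr : 0 ≤ r)
    (hα0 : 0 ≤ α) (hα2 : α ≤ 2)
    (z : Fin K → EuclideanSpace ℝ (Fin p) × Y) (m θ0 : EuclideanSpace ℝ (Fin p) × Y)
    (hmin : ∑ k, scaledProdDist α m (z k) ≤ ∑ k, scaledProdDist α θ0 (z k))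
    (hcount : ((Finset.univ.filter
        (fun k => 3 * r < scaledProdDist α (z k) θ0)).card : ℝ) ≤ (K : ℝ) / 5) :
    scaledProdDist α m θ0 ≤ 10 * r := by
  classical
  set B := Finset.univ.filter (fun k => 3 * r < scaledProdDist α (z k) θ0) with hB
  set G := Finset.univ.filter (fun k => ¬ (3 * r < scaledProdDist α (z k) θ0)) with hG
  set D := scaledProdDist α m θ0 with hD
  have hD0 : 0 ≤ D := spd_nonneg _ _ _
  have hcard : B.card + G.card = K := by
    rw [hB, hG]
    simpa using Finset.card_filter_add_card_filter_not
      (s := (Finset.univ : Finset (Fin K)))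
      (p := fun k => 3 * r < scaledProdDist α (z k) θ0)
  have hsplitm : ∑ k ∈ G, scaledProdDist α m (z k) + ∑ k ∈ B, scaledProdDist α m (z k)
      = ∑ k, scaledProdDist α m (z k) := by
    rw [hB, hG, add_comm]
    exact Finset.sum_filter_add_sum_filter_not _ _ _
  have hsplit0 : ∑ k ∈ G, scaledProdDist α θ0 (z k) + ∑ k ∈ B, scaledProdDist α θ0 (z k)
      = ∑ k, scaledProdDist α θ0 (z k) := by
    rw [hB, hG, add_comm]
    exact Finset.sum_filter_add_sum_filter_not _ _ _
  have hGgood : ∀ k ∈ G, scaledProdDist α (z k) θ0 ≤ 3 * r := by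
    intro k hk
    rw [hG, Finset.mem_filter] at hk
    exact le_of_not_gt hk.2
  have S1 : (G.card : ℝ) * (D - 3 * r) ≤ ∑ k ∈ G, scaledProdDist α m (z k) := by
    have : ∀ k ∈ G, D - 3 * r ≤ scaledProdDist α m (z k) := by
      intro k hk
      have ht := spd_triangle hα0 hα2 m (z k) θ0
      have := hGgood k hk
      linarith
    have h := Finset.card_nsmul_le_sum G _ _ this
    simpa [nsmul_eq_mul] using h
  have S2 : ∑ k ∈ G, scaledProdDist α θ0 (z k) ≤ (G.card : ℝ) * (3 * r) := by
    have : ∀ k ∈ G, scaledProdDist α θ0 (z k) ≤ 3 * r := by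
      intro k hk
      have := hGgood k hk
      rw [spd_symm α (z k) θ0] at this
      exact this
    have h := Finset.sum_le_card_nsmul G _ _ this
    simpa [nsmul_eq_mul] using h
  have S3 : ∑ k ∈ B, scaledProdDist α θ0 (z k)
      ≤ (B.card : ℝ) * D + ∑ k ∈ B, scaledProdDist α m (z k) := by
    have h : ∀ k ∈ B, scaledProdDist α θ0 (z k) ≤ D + scaledProdDist α m (z k) := by
      intro k _
      have ht := spd_triangle hα0 hα2 θ0 m (z k)
      rw [spd_symm α θ0 m] at ht
      linarith
    calc ∑ k ∈ B, scaledProdDist α θ0 (z k)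
        ≤ ∑ k ∈ B, (D + scaledProdDist α m (z k)) := Finset.sum_le_sum h
      _ = (B.card : ℝ) * D + ∑ k ∈ B, scaledProdDist α m (z k) := by
          rw [Finset.sum_add_distrib, Finset.sum_const, nsmul_eq_mul]
  have key : (G.card : ℝ) * D ≤ 6 * r * (G.card : ℝ) + (B.card : ℝ) * D := by
    nlinarith [hmin, hsplitm, hsplit0, S1, S2, S3]
  have hKR : (0:ℝ) < (K : ℝ) := by exact_mod_cast hK
  have hGK : (G.card : ℝ) = (K : ℝ) - (B.card : ℝ) := by
    have : (B.card : ℝ) + (G.card : ℝ) = (K : ℝ) := by exact_mod_cast hcard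
    linarith
  have hGle : (G.card : ℝ) ≤ (K : ℝ) := by
    have : (0:ℝ) ≤ (B.card : ℝ) := Nat.cast_nonneg _
    linarith
  nlinarith [mul_le_mul_of_nonneg_left hcount hD0, key]

end Aux

/-- Factorwise deviation tradeoff: with probability at least `1 - exp (-K/32)`,
both the mean factor and the second factor of the scaled geometric median-of-means
satisfy the stated bounds. -/
theorem stmt_2 {p : ℕ} (hp : 1 ≤ p) {Y : Type*} [MetricSpace Y]
    [MeasurableSpace Y] [BorelSpace Y]
    (α : ℝ) (hα0 : 0 < α) (hα2 : α < 2)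
    {Ω : Type*} [MeasurableSpace Ω] (P : Measure Ω) [IsProbabilityMeasure P]
    (θ0 : EuclideanSpace ℝ (Fin p) × Y)
    (vμ vU : ℝ) (hvμ : 0 < vμ) (hvU : 0 < vU) (b : ℝ) (hb : 1 ≤ b)
    {K : ℕ} (hK : 0 < K)
    (θhat : Fin K → Ω → EuclideanSpace ℝ (Fin p) × Y)
    (hmeas : ∀ k, Measurable (θhat k))
    (hindep : iIndepFun θhat P)
    (hmom : ∀ k, ∫⁻ ω, ENNReal.ofReal (scaledProdDist α (θhat k ω) θ0 ^ 2) ∂P ≤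
      ENNReal.ofReal ((α * vμ + (2 - α) * vU) / b))
    (θtilde : Ω → EuclideanSpace ℝ (Fin p) × Y) (hθmeas : Measurable θtilde)
    (hmin : ∀ᵐ ω ∂P, ∀ θ : EuclideanSpace ℝ (Fin p) × Y,
      ∑ k, scaledProdDist α (θtilde ω) (θhat k ω) ≤ ∑ k, scaledProdDist α θ (θhat k ω)) :
    ENNReal.ofReal (1 - Real.exp (-(K : ℝ) / 32)) ≤
      P {ω | ‖(θtilde ω).1 - θ0.1‖ ≤
              (10 / Real.sqrt α) * Real.sqrt ((α * vμ + (2 - α) * vU) / b) ∧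
             dist (θtilde ω).2 θ0.2 ≤
              (10 / Real.sqrt (2 - α)) * Real.sqrt ((α * vμ + (2 - α) * vU) / b)} := by

  classical
  set V : ℝ := α * vμ + (2 - α) * vU with hV_def
  have hb0 : (0:ℝ) < b := lt_of_lt_of_le one_pos hb
  have hV : 0 < V := by
    have : 0 < (2 - α) * vU := mul_pos (by linarith) hvU
    have : 0 < α * vμ := mul_pos hα0 hvμ
    unfold V
    nlinarith [mul_pos (show (0:ℝ) < 2 - α by linarith) hvU]
  have hVb : 0 < V / b := div_pos hV hb0
  set r : ℝ := Real.sqrt (V / b) with hr_def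
  have hr : 0 < r := Real.sqrt_pos.2 hVb
  have hr2 : r ^ 2 = V / b := Real.sq_sqrt hVb.le
  -- measurability of the distance to θ0
  have hg : Measurable (fun t : EuclideanSpace ℝ (Fin p) × Y => scaledProdDist α t θ0) := by
    unfold scaledProdDist
    apply Measurable.sqrt
    exact (((measurable_fst.sub measurable_const).norm.pow_const 2).const_mul α).add
      ((((continuous_id.dist continuous_const).measurable.comp measurable_snd).pow_const 2).const_mul (2 - α))
  -- the indicator functions
  set χ : (EuclideanSpace ℝ (Fin p) × Y) → ℝ :=
    fun t => if 3 * r < scaledProdDist α t θ0 then 1 else 0 with hχ_def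
  have hχm : Measurable χ :=
    Measurable.ite (measurableSet_lt measurable_const hg) measurable_const measurable_const
  set X : Fin K → Ω → ℝ := fun k => χ ∘ θhat k with hX_def
  have hXm : ∀ k, Measurable (X k) := fun k => hχm.comp (hmeas k)
  have hXindep : iIndepFun X P :=
    hindep.comp (fun _ => χ) (fun _ => hχm)
  -- bad events
  set A : Fin K → Set Ω := fun k => {ω | 3 * r < scaledProdDist α (θhat k ω) θ0} with hA_def
  have hAmeas : ∀ k, MeasurableSet (A k) := fun k =>
    (measurableSet_lt measurable_const (hg.comp (hmeas k)))
  -- Markov: P (A k) ≤ 1/9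
  have hA19 : ∀ k, P (A k) ≤ ENNReal.ofReal (1/9) := by
    intro k
    have hne9 : ENNReal.ofReal (9 * (V / b)) ≠ 0 := by
      simp only [ne_eq, ENNReal.ofReal_eq_zero, not_le]
      linarith
    have hsub : A k ⊆ {ω | ENNReal.ofReal (9 * (V / b)) ≤
        ENNReal.ofReal (scaledProdDist α (θhat k ω) θ0 ^ 2)} := by
      intro ω hω
      simp only [hA_def, Set.mem_setOf_eq] at hω ⊢
      apply ENNReal.ofReal_le_ofReal
      nlinarith [hr2, hr.le, spd_nonneg α (θhat k ω) θ0]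
    have hmk := mul_meas_ge_le_lintegral₀
      (μ := P)
      (f := fun ω => ENNReal.ofReal (scaledProdDist α (θhat k ω) θ0 ^ 2))
      (((hg.comp (hmeas k)).pow_const 2).ennreal_ofReal.aemeasurable)
      (ENNReal.ofReal (9 * (V / b)))
    calc P (A k) ≤ P {ω | ENNReal.ofReal (9 * (V / b)) ≤
          ENNReal.ofReal (scaledProdDist α (θhat k ω) θ0 ^ 2)} := measure_mono hsub
      _ ≤ (∫⁻ ω, ENNReal.ofReal (scaledProdDist α (θhat k ω) θ0 ^ 2) ∂P) /
            ENNReal.ofReal (9 * (V / b)) := by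
          rw [ENNReal.le_div_iff_mul_le (Or.inl hne9) (Or.inl ENNReal.ofReal_ne_top)]
          rw [mul_comm]
          exact hmk
      _ ≤ ENNReal.ofReal (V / b) / ENNReal.ofReal (9 * (V / b)) := by
          gcongr
          exact hmom k
      _ = ENNReal.ofReal (1/9) := by
          rw [← ENNReal.ofReal_div_of_pos (by linarith)]
          congr 1
          rw [show (9:ℝ) * (V / b) = (V / b) * 9 by ring, div_mul_eq_div_div,
            div_self hVb.ne']
  -- mgf computation
  set t0 : ℝ := Real.log 2 with ht0_def
  have ht0 : 0 ≤ t0 := Real.log_nonneg one_le_two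
  have hXrw : ∀ k, (fun ω => Real.exp (t0 * X k ω))
      = fun ω => (A k).indicator (fun _ => (1:ℝ)) ω + 1 := by
    intro k
    funext ω
    by_cases hc : 3 * r < scaledProdDist α (θhat k ω) θ0
    · have hmem : ω ∈ A k := hc
      simp only [hX_def, hχ_def, Function.comp_apply, if_pos hc,
        Set.indicator_of_mem hmem, mul_one, ht0_def]
      rw [Real.exp_log (by norm_num : (0:ℝ) < 2)]
      norm_num
    · have hmem : ω ∉ A k := hc
      simp only [hX_def, hχ_def, Function.comp_apply, if_neg hc,
        Set.indicator_of_notMem hmem, mul_zero, Real.exp_zero]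
      norm_num
  have hAind : ∀ k, Integrable ((A k).indicator (fun _ => (1:ℝ))) P := fun k =>
    (integrable_const 1).indicator (hAmeas k)
  have hXint : ∀ k, Integrable (fun ω => Real.exp (t0 * X k ω)) P := by
    intro k
    rw [hXrw k]
    exact (hAind k).add (integrable_const 1)
  have hmgf : ∀ k, mgf (X k) P t0 ≤ 10/9 := by
    intro k
    have htoReal : (P (A k)).toReal ≤ 1/9 := by
      refine ENNReal.toReal_le_of_le_ofReal (by norm_num) (hA19 k)
    calc mgf (X k) P t0 = ∫ ω, Real.exp (t0 * X k ω) ∂P := rfl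
      _ = ∫ ω, ((A k).indicator (fun _ => (1:ℝ)) ω + 1) ∂P := by rw [hXrw k]
      _ = (∫ ω, (A k).indicator (fun _ => (1:ℝ)) ω ∂P) + ∫ _, (1:ℝ) ∂P :=
          integral_add (hAind k) (integrable_const 1)
      _ = (P (A k)).toReal + 1 := by
          rw [integral_indicator_const (1:ℝ) (hAmeas k), integral_const]
          simp [measureReal_def]
      _ ≤ 10/9 := by linarith
  -- Chernoff
  have hint_sum : Integrable (fun ω => Real.exp (t0 * (∑ k, X k) ω)) P :=
    iIndepFun.integrable_exp_mul_sum hXindep hXm (fun k _ => hXint k)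
  have hchern := measure_ge_le_exp_mul_mgf (μ := P) (X := ∑ k, X k)
    ((K:ℝ)/5) ht0 hint_sum
  rw [hXindep.mgf_sum hXm Finset.univ] at hchern
  have hprod : ∏ k, mgf (X k) P t0 ≤ (10/9 : ℝ) ^ K := by
    calc ∏ k, mgf (X k) P t0 ≤ ∏ _k : Fin K, (10/9 : ℝ) :=
          Finset.prod_le_prod (fun k _ => mgf_nonneg) (fun k _ => hmgf k)
      _ = (10/9 : ℝ) ^ K := by
          rw [Finset.prod_const, Finset.card_univ, Fintype.card_fin]
  have hfinal : Real.exp (-t0 * ((K:ℝ)/5)) * (10/9 : ℝ) ^ K ≤ Real.exp (-(K:ℝ)/32) := by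
    have heq : Real.exp (-t0 * ((K:ℝ)/5)) * (10/9 : ℝ) ^ K
        = ((10/9 : ℝ) * Real.exp (-t0/5)) ^ K := by
      rw [mul_pow, show (-t0 * ((K:ℝ)/5)) = ((K:ℕ):ℝ) * (-t0/5) by push_cast; ring,
        Real.exp_nat_mul]
      ring
    rw [heq]
    calc ((10/9 : ℝ) * Real.exp (-t0/5)) ^ K ≤ (Real.exp (-(1/32 : ℝ))) ^ K := by
          apply pow_le_pow_left₀ (by positivity)
          exact base_num_ineq
      _ = Real.exp (-(K:ℝ)/32) := by
          rw [← Real.exp_nat_mul]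
          congr 1
          push_cast
          ring
  have hbadbound : P {ω | (K:ℝ)/5 ≤ (∑ k, X k) ω} ≤
      ENNReal.ofReal (Real.exp (-(K:ℝ)/32)) := by
    refine (ENNReal.le_ofReal_iff_toReal_le (measure_ne_top P _) (Real.exp_pos _).le).2 ?_
    calc (P {ω | (K:ℝ)/5 ≤ (∑ k, X k) ω}).toReal
        ≤ Real.exp (-t0 * ((K:ℝ)/5)) * ∏ k, mgf (X k) P t0 := hchern
      _ ≤ Real.exp (-t0 * ((K:ℝ)/5)) * (10/9 : ℝ) ^ K := by
          apply mul_le_mul_of_nonneg_left hprod (Real.exp_pos _).le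
      _ ≤ Real.exp (-(K:ℝ)/32) := hfinal
  -- the good event
  set E : Set Ω := {ω | (∑ k, X k) ω < (K:ℝ)/5} with hE_def
  have hSm : Measurable (∑ k, X k) := by
    have h : (∑ k, X k) = fun a => ∑ k, X k a := by
      funext a; simp [Finset.sum_apply]
    rw [h]
    exact Finset.measurable_sum Finset.univ (fun k _ => hXm k)
  have hEmeas : MeasurableSet E := measurableSet_lt hSm measurable_const
  have hEcompl : Eᶜ = {ω | (K:ℝ)/5 ≤ (∑ k, X k) ω} := by
    ext ω; simp [hE_def, not_lt]
  -- almost everywhere, E implies the target event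
  have hae : ∀ᵐ ω ∂P, ω ∈ E →
      ω ∈ {ω | ‖(θtilde ω).1 - θ0.1‖ ≤
              (10 / Real.sqrt α) * Real.sqrt ((α * vμ + (2 - α) * vU) / b) ∧
             dist (θtilde ω).2 θ0.2 ≤
              (10 / Real.sqrt (2 - α)) * Real.sqrt ((α * vμ + (2 - α) * vU) / b)} := by
    filter_upwards [hmin] with ω hω hE
    have hsum : (∑ k, X k) ω
        = ((Finset.univ.filter
            (fun k => 3 * r < scaledProdDist α (θhat k ω) θ0)).card : ℝ) := by
      rw [Finset.sum_apply]
      simp only [hX_def, hχ_def, Function.comp_apply]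
      rw [Finset.sum_boole]
    have hcount : ((Finset.univ.filter
        (fun k => 3 * r < scaledProdDist α (θhat k ω) θ0)).card : ℝ) ≤ (K:ℝ)/5 := by
      rw [hE_def, Set.mem_setOf_eq, hsum] at hE
      exact hE.le
    have hDm : scaledProdDist α (θtilde ω) θ0 ≤ 10 * r :=
      median_close hK hr.le hα0.le hα2.le (fun k => θhat k ω) (θtilde ω) θ0 (hω θ0) hcount
    have hsq : α * ‖(θtilde ω).1 - θ0.1‖ ^ 2 + (2 - α) * dist (θtilde ω).2 θ0.2 ^ 2
        ≤ 100 * (V / b) := by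
      have h2 : scaledProdDist α (θtilde ω) θ0 ^ 2 ≤ (10 * r) ^ 2 :=
        pow_le_pow_left₀ (spd_nonneg _ _ _) hDm 2
      rw [spd_sq hα0.le hα2.le] at h2
      have h3 : (10 * r) ^ 2 = 100 * (V / b) := by
        rw [mul_pow, hr2]; norm_num
      linarith
    constructor
    · -- mean factor
      set sa : ℝ := Real.sqrt α with hsa_def
      have hsa : 0 < sa := Real.sqrt_pos.2 hα0
      have hsa2 : sa ^ 2 = α := Real.sq_sqrt hα0.le
      have hm2 : (sa * ‖(θtilde ω).1 - θ0.1‖) ^ 2 ≤ (10 * r) ^ 2 := by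
        rw [mul_pow, hsa2, mul_pow, hr2]
        have := mul_nonneg (show (0:ℝ) ≤ 2 - α by linarith)
          (sq_nonneg (dist (θtilde ω).2 θ0.2))
        linarith
      have hm : sa * ‖(θtilde ω).1 - θ0.1‖ ≤ 10 * r :=
        le_of_pow_le_pow_left₀ two_ne_zero (by positivity) hm2
      show ‖(θtilde ω).1 - θ0.1‖ ≤ 10 / Real.sqrt α * Real.sqrt ((α * vμ + (2 - α) * vU) / b)
      rw [div_mul_eq_mul_div, le_div_iff₀ hsa]
      calc ‖(θtilde ω).1 - θ0.1‖ * sa = sa * ‖(θtilde ω).1 - θ0.1‖ := by ring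
        _ ≤ 10 * r := hm
        _ = 10 * Real.sqrt ((α * vμ + (2 - α) * vU) / b) := rfl
    · -- second factor
      set sb : ℝ := Real.sqrt (2 - α) with hsb_def
      have hsb : 0 < sb := Real.sqrt_pos.2 (by linarith)
      have hsb2 : sb ^ 2 = 2 - α := Real.sq_sqrt (by linarith)
      have hm2 : (sb * dist (θtilde ω).2 θ0.2) ^ 2 ≤ (10 * r) ^ 2 := by
        rw [mul_pow, hsb2, mul_pow, hr2]
        have := mul_nonneg hα0.le (sq_nonneg ‖(θtilde ω).1 - θ0.1‖)
        linarith
      have hm : sb * dist (θtilde ω).2 θ0.2 ≤ 10 * r :=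
        le_of_pow_le_pow_left₀ two_ne_zero (by positivity) hm2
      show dist (θtilde ω).2 θ0.2 ≤ 10 / Real.sqrt (2 - α) * Real.sqrt ((α * vμ + (2 - α) * vU) / b)
      rw [div_mul_eq_mul_div, le_div_iff₀ hsb]
      calc dist (θtilde ω).2 θ0.2 * sb = sb * dist (θtilde ω).2 θ0.2 := by ring
        _ ≤ 10 * r := hm
        _ = 10 * Real.sqrt ((α * vμ + (2 - α) * vU) / b) := rfl
  -- conclude
  calc ENNReal.ofReal (1 - Real.exp (-(K:ℝ)/32))
      = 1 - ENNReal.ofReal (Real.exp (-(K:ℝ)/32)) := by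
        rw [ENNReal.ofReal_sub _ (Real.exp_pos _).le, ENNReal.ofReal_one]
    _ ≤ 1 - P Eᶜ := by
        apply tsub_le_tsub_left
        rw [hEcompl]
        exact hbadbound
    _ = P E := by
        have h := prob_compl_eq_one_sub (μ := P) hEmeas.compl
        rw [compl_compl] at h
        exact h.symm
    _ ≤ P _ := measure_mono_ae (hae.mono fun ω h => h)
end

section
/- Let E be a finite-dimensional real inner product space, (Ω, 𝔽, P) a probability space, and Y : Ω → E a random vector with E‖Y‖ < ∞. Suppose y* ∈ E minimizes s ↦ E‖s − Y‖ over E, that P(Y = y*) = 0, and that E[ ‖Y − y*‖^{−1} ] < ∞. Then E[ (Y − y*)/‖Y − y*‖ ] = 0. -/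
open MeasureTheory Filter Topology RealInnerProductSpace

lemma norm_line_deriv {E : Type*} [NormedAddCommGroup E] [InnerProductSpace ℝ E]
    (x v : E) (hx : x ≠ 0) :
    HasDerivAt (fun t : ℝ => ‖x + t • v‖) (⟪x, v⟫ / ‖x‖) 0 := by
  have hline : HasDerivAt (fun t : ℝ => x + t • v) v 0 := by
    simpa using ((hasDerivAt_id (0:ℝ)).smul_const v).const_add x
  have hsq : HasDerivAt (fun t : ℝ => ‖x + t • v‖ ^ 2) (2 * ⟪x + (0:ℝ) • v, v⟫) 0 :=
    hline.norm_sq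
  have hne : ‖x + (0:ℝ) • v‖ ^ 2 ≠ 0 := by
    simpa using pow_ne_zero 2 (norm_ne_zero_iff.2 hx)
  have := hsq.sqrt hne
  have hxn : (0:ℝ) < ‖x‖ := norm_pos_iff.2 hx
  simp only [zero_smul, add_zero] at this
  have heq : (fun t : ℝ => Real.sqrt (‖x + t • v‖ ^ 2)) = fun t : ℝ => ‖x + t • v‖ := by
    funext t; rw [Real.sqrt_sq (norm_nonneg _)]
  rw [heq] at this
  convert this using 1
  rw [Real.sqrt_sq (norm_nonneg _)]
  field_simp

/-- First-order condition for the spatial median: if `y*` minimizes `s ↦ E‖s - Y‖` for an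
integrable random vector `Y` in a finite-dimensional real inner product space, with
`P(Y = y*) = 0` and `E‖Y - y*‖⁻¹ < ∞`, then `E[(Y - y*)/‖Y - y*‖] = 0`. -/
theorem stmt_15 {E : Type*} [NormedAddCommGroup E] [InnerProductSpace ℝ E]
    [FiniteDimensional ℝ E] [MeasurableSpace E] [BorelSpace E]
    {Ω : Type*} [MeasurableSpace Ω] (P : Measure Ω) [IsProbabilityMeasure P]
    (Y : Ω → E) (hYmeas : Measurable Y)
    (hYint : Integrable (fun ω => ‖Y ω‖) P)
    (ystar : E)
    (hmin : ∀ s : E, ∫ ω, ‖ystar - Y ω‖ ∂P ≤ ∫ ω, ‖s - Y ω‖ ∂P)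
    (hatom : P {ω | Y ω = ystar} = 0)
    (hinv : Integrable (fun ω => ‖Y ω - ystar‖⁻¹) P) :
    ∫ ω, ‖Y ω - ystar‖⁻¹ • (Y ω - ystar) ∂P = 0 := by
  set u : Ω → E := fun ω => ‖Y ω - ystar‖⁻¹ • (Y ω - ystar) with hu
  -- u is integrable (bounded by 1)
  have humeas : AEStronglyMeasurable u P := by
    apply Measurable.aestronglyMeasurable
    exact ((hYmeas.sub measurable_const).norm.inv).smul (hYmeas.sub measurable_const)
  have hubd : ∀ ω, ‖u ω‖ ≤ 1 := by
    intro ω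
    by_cases h : Y ω - ystar = 0
    · simp [hu, h]
    · simp only [hu, norm_smul, norm_inv, norm_norm]
      rw [inv_mul_cancel₀ (norm_ne_zero_iff.2 h)]
  have huint : Integrable u P :=
    (integrable_const (1:ℝ)).mono' humeas (Filter.Eventually.of_forall hubd)
  -- integrability of norms
  have hnint : ∀ s : E, Integrable (fun ω => ‖s - Y ω‖) P := by
    intro s
    refine (hYint.add (integrable_const ‖s‖)).mono'
      (Measurable.aestronglyMeasurable ?_) (Filter.Eventually.of_forall fun ω => ?_)
    · exact (measurable_const.sub hYmeas).norm
    · simp only [Real.norm_eq_abs, abs_of_nonneg (norm_nonneg _)]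
      calc ‖s - Y ω‖ ≤ ‖s‖ + ‖Y ω‖ := norm_sub_le _ _
        _ = ‖Y ω‖ + ‖s‖ := by ring
  -- key: for every v, ⟪∫ u, v⟫ ≤ 0
  have key : ∀ v : E, ⟪∫ ω, u ω ∂P, v⟫ ≤ 0 := by
    intro v
    set t : ℕ → ℝ := fun n => ((n:ℝ) + 1)⁻¹ with ht
    have htpos : ∀ n, 0 < t n := fun n => by positivity
    set F : ℕ → Ω → ℝ :=
      fun n ω => (‖(ystar - Y ω) + t n • v‖ - ‖ystar - Y ω‖) / t n with hF
    -- each F n integrable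
    have hFint : ∀ n, Integrable (F n) P := by
      intro n
      have h1 : Integrable (fun ω => ‖(ystar + t n • v) - Y ω‖) P := hnint _
      have h2 : Integrable (fun ω => ‖ystar - Y ω‖) P := hnint _
      have : Integrable (fun ω => ‖(ystar + t n • v) - Y ω‖ - ‖ystar - Y ω‖) P := h1.sub h2
      refine (this.div_const (t n)).congr (Filter.Eventually.of_forall fun ω => ?_)
      simp only [hF]
      congr 2
      abel_nf
    -- bound
    have hFbd : ∀ n ω, ‖F n ω‖ ≤ ‖v‖ := by
      intro n ω
      have h1 : |‖(ystar - Y ω) + t n • v‖ - ‖ystar - Y ω‖| ≤ ‖t n • v‖ := by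
        simpa using abs_norm_sub_norm_le ((ystar - Y ω) + t n • v) (ystar - Y ω)
      rw [norm_smul, Real.norm_eq_abs, abs_of_pos (htpos n)] at h1
      simp only [hF, Real.norm_eq_abs, abs_div, abs_of_pos (htpos n)]
      rw [div_le_iff₀ (htpos n)]
      linarith [h1]
    -- a.e. pointwise limit
    have haelim : ∀ᵐ ω ∂P, Tendsto (fun n => F n ω) atTop (𝓝 (-⟪u ω, v⟫)) := by
      have hae : ∀ᵐ ω ∂P, Y ω ≠ ystar := by
        rw [ae_iff]
        simpa using hatom
      filter_upwards [hae] with ω hω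
      set x := ystar - Y ω with hx
      have hxne : x ≠ 0 := sub_ne_zero.2 (fun h => hω h.symm)
      have hder := norm_line_deriv x v hxne
      rw [hasDerivAt_iff_tendsto_slope] at hder
      have htend : Tendsto t atTop (𝓝[≠] (0:ℝ)) := by
        apply tendsto_nhdsWithin_of_tendsto_nhds_of_eventually_within
        · exact tendsto_one_div_add_atTop_nhds_zero_nat.congr fun n => by
            simp [ht, one_div]
        · exact Filter.Eventually.of_forall fun n => (htpos n).ne'
      have hcomp := hder.comp htend
      have hslope : ∀ n, slope (fun t : ℝ => ‖x + t • v‖) 0 (t n) = F n ω := by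
        intro n
        simp [slope_def_field, hF, div_eq_inv_mul, hx]
      have heq : -⟪u ω, v⟫ = ⟪x, v⟫ / ‖x‖ := by
        have : Y ω - ystar = -x := by simp [hx]
        simp only [hu, this, norm_neg, inner_smul_left, RCLike.conj_to_real, inner_neg_left]
        field_simp
      rw [heq]
      refine hcomp.congr fun n => ?_
      exact hslope n
    -- dominated convergence
    have hDCT : Tendsto (fun n => ∫ ω, F n ω ∂P) atTop (𝓝 (∫ ω, -⟪u ω, v⟫ ∂P)) := by
      refine tendsto_integral_of_dominated_convergence (fun _ => ‖v‖)
        (fun n => (hFint n).aestronglyMeasurable) (integrable_const _)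
        (fun n => Filter.Eventually.of_forall (hFbd n)) haelim
    -- each integral nonneg
    have hnonneg : ∀ n, 0 ≤ ∫ ω, F n ω ∂P := by
      intro n
      have h1 : Integrable (fun ω => ‖(ystar + t n • v) - Y ω‖) P := hnint _
      have h2 : Integrable (fun ω => ‖ystar - Y ω‖) P := hnint _
      have heq : ∫ ω, F n ω ∂P
          = (∫ ω, ‖(ystar + t n • v) - Y ω‖ ∂P - ∫ ω, ‖ystar - Y ω‖ ∂P) / t n := by
        rw [← integral_sub h1 h2, ← integral_div]
        refine integral_congr_ae (Filter.Eventually.of_forall fun ω => ?_)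
        simp only [hF]
        congr 2
        abel_nf
      rw [heq]
      apply div_nonneg _ (htpos n).le
      linarith [hmin (ystar + t n • v)]
    have hlim : 0 ≤ ∫ ω, -⟪u ω, v⟫ ∂P := ge_of_tendsto' hDCT hnonneg
    rw [integral_neg] at hlim
    have hiv : ∫ ω, ⟪u ω, v⟫ ∂P = ⟪∫ ω, u ω ∂P, v⟫ := by
      calc ∫ ω, ⟪u ω, v⟫ ∂P = ∫ ω, ⟪v, u ω⟫ ∂P := by
            simp_rw [real_inner_comm]
        _ = ⟪v, ∫ ω, u ω ∂P⟫ := integral_inner huint v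
        _ = ⟪∫ ω, u ω ∂P, v⟫ := real_inner_comm _ _
    linarith [hiv ▸ hlim]
  have h1 := key (∫ ω, u ω ∂P)
  have h2 : ⟪∫ ω, u ω ∂P, ∫ ω, u ω ∂P⟫ = ‖∫ ω, u ω ∂P‖ ^ 2 := real_inner_self_eq_norm_sq _
  have : ‖∫ ω, u ω ∂P‖ ^ 2 ≤ 0 := by linarith [h2 ▸ h1]
  have : ‖∫ ω, u ω ∂P‖ = 0 := by nlinarith [norm_nonneg (∫ ω, u ω ∂P)]
  exact norm_eq_zero.1 this
end

section
/- Let d ≥ 1, let f_n : ℝ^d → ℝ be convex functions converging to a convex function f : ℝ^d → ℝ uniformly on every compact subset of ℝ^d, and suppose f has a unique minimizer x* ∈ ℝ^d (so f(x*) < f(x) for all x ≠ x*). If for each n the function f_n attains a minimum at some x_n ∈ ℝ^d, then x_n → x* as n → ∞. -/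
open Filter

/-- Argmin transfer for convex functions: if convex `f_n : ℝ^d → ℝ` converge to a convex
`f` uniformly on every compact set, `f` has a unique minimizer `x*`, and each `f_n`
attains a minimum at `x_n`, then `x_n → x*`. -/
theorem stmt_17 (d : ℕ) (hd : 1 ≤ d)
    (f : ℕ → EuclideanSpace ℝ (Fin d) → ℝ) (g : EuclideanSpace ℝ (Fin d) → ℝ)
    (hfconv : ∀ n, ConvexOn ℝ Set.univ (f n))
    (hgconv : ConvexOn ℝ Set.univ g)
    (hunif : ∀ C : Set (EuclideanSpace ℝ (Fin d)), IsCompact C →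
      TendstoUniformlyOn f g atTop C)
    (xstar : EuclideanSpace ℝ (Fin d))
    (huniq : ∀ x : EuclideanSpace ℝ (Fin d), x ≠ xstar → g xstar < g x)
    (x : ℕ → EuclideanSpace ℝ (Fin d))
    (hmin : ∀ n, ∀ y : EuclideanSpace ℝ (Fin d), f n (x n) ≤ f n y) :
    Tendsto x atTop (nhds xstar) := by
  haveI : Nontrivial (EuclideanSpace ℝ (Fin d)) := by
    refine ⟨EuclideanSpace.single ⟨0, hd⟩ 1, 0, fun h => ?_⟩
    have := congrArg (fun v : EuclideanSpace ℝ (Fin d) => v ⟨0, hd⟩) h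
    simp [EuclideanSpace.single_apply] at this
  have hg_cont : Continuous g := by
    rw [← continuousOn_univ]
    exact hgconv.continuousOn isOpen_univ
  rw [Metric.tendsto_atTop]
  intro ε hε
  set S := Metric.sphere xstar ε with hS
  have hScpt : IsCompact S := isCompact_sphere _ _
  have hSne : S.Nonempty := NormedSpace.sphere_nonempty.2 hε.le
  obtain ⟨z, hzS, hzmin⟩ := hScpt.exists_isMinOn hSne hg_cont.continuousOn
  have hzne : z ≠ xstar := by
    intro h
    rw [hS, h, Metric.mem_sphere, dist_self] at hzS
    exact absurd hzS.symm hε.ne'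
  set m := g z - g xstar with hm
  have hmpos : 0 < m := sub_pos.2 (huniq z hzne)
  set B := Metric.closedBall xstar ε with hBdef
  have hBcpt : IsCompact B := isCompact_closedBall _ _
  have hB := (Metric.tendstoUniformlyOn_iff.1 (hunif B hBcpt)) (m/3) (by linarith)
  rw [eventually_atTop] at hB
  obtain ⟨N, hN⟩ := hB
  refine ⟨N, fun n hn => ?_⟩
  by_contra hcon
  push_neg at hcon
  have hdpos : 0 < dist (x n) xstar := lt_of_lt_of_le hε hcon
  set t := ε / dist (x n) xstar with ht
  have ht0 : 0 < t := div_pos hε hdpos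
  have ht1 : t ≤ 1 := (div_le_one hdpos).2 hcon
  set y := (1 - t) • xstar + t • x n with hy
  have hysub : y - xstar = t • (x n - xstar) := by
    rw [hy]; module
  have hyS : y ∈ S := by
    rw [hS, Metric.mem_sphere, dist_eq_norm, hysub, norm_smul,
      Real.norm_eq_abs, abs_of_pos ht0, ← dist_eq_norm, ht]
    field_simp
  have hyB : y ∈ B := Metric.sphere_subset_closedBall hyS
  have hxB : xstar ∈ B := Metric.mem_closedBall_self hε.le
  have h1 : f n y ≤ (1 - t) * f n xstar + t * f n (x n) :=
    (hfconv n).2 (Set.mem_univ _) (Set.mem_univ _) (by linarith) ht0.le (by ring)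
  have h2 : f n y ≤ f n xstar := by
    have := hmin n xstar
    nlinarith
  have h3 := hN n hn y hyB
  have h4 := hN n hn xstar hxB
  have h5 : g z ≤ g y := hzmin hyS
  rw [Real.dist_eq] at h3 h4
  have h3' := abs_lt.1 h3
  have h4' := abs_lt.1 h4
  linarith [h3'.1, h3'.2, h4'.1, h4'.2]
end
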